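/- arXiv:1810.02142 — 8 statements merged into one kernel-verified Lean document; each statement's English description precedes it below -/
import Mathlib

section
/- For all sequential propositional statements P and Q, se(¬(P ∧' Q)) = se(¬P ∨' ¬Q), i.e., the sequential De Morgan law holds under short-circuit evaluation semantics. -/
inductive ETree (A : Type*) : Type _
  | T : ETree A
  | F : ETree A
  | node : ETree A → A → ETree A → ETree A

/-- Leaf replacement: `X.repl Y Z = X[T↦Y, F↦Z]`. -/
def ETree.repl {A : Type*} : ETree A → ETree A → ETree A → ETree A
  | .T, y, _ => y
  | .F, _, z => z
  | .node l a r, y, z => .node (l.repl y z) a (r.repl y z)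
inductive SeqProp (A : Type*) : Type _
  | atom : A → SeqProp A
  | T : SeqProp A
  | F : SeqProp A
  | neg : SeqProp A → SeqProp A
  | and : SeqProp A → SeqProp A → SeqProp A
  | or : SeqProp A → SeqProp A → SeqProp A

/-- Short-circuit evaluation function. -/
def se {A : Type*} : SeqProp A → ETree A
  | .T => .T
  | .F => .F
  | .atom a => .node .T a .F
  | .neg P => (se P).repl .F .T
  | .and P Q => (se P).repl (se Q) .F
  | .or P Q => (se P).repl .T (se Q)

/-! Leaf replacement composes: replacing the leaves of `X[T↦Y, F↦Z]` is the same as replacing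
the leaves of `Y` and `Z` first. Hence both sides evaluate to `se P [T↦se (¬Q), F↦T]`. -/

theorem ETree.repl_repl {A : Type*} (x y z y' z' : ETree A) :
    (x.repl y z).repl y' z' = x.repl (y.repl y' z') (z.repl y' z') := by
  induction x with
  | T => rfl
  | F => rfl
  | node l a r ihl ihr => simp only [ETree.repl, ihl, ihr]

theorem se_deMorgan {A : Type*} (P Q : SeqProp A) :
    se (SeqProp.neg (SeqProp.and P Q)) = se (SeqProp.or (SeqProp.neg P) (SeqProp.neg Q)) := by
  simp only [se, ETree.repl_repl, ETree.repl]
end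

section
/- For all sequential propositional statements P, Q, R, se((P ∧' Q) ∧' R) = se(P ∧' (Q ∧' R)), i.e., sequential conjunction is associative under short-circuit evaluation semantics. -/
theorem se_and_assoc {A : Type*} (P Q R : SeqProp A) :
    se (SeqProp.and (SeqProp.and P Q) R) = se (SeqProp.and P (SeqProp.and Q R)) :=
  -- `repl_repl` turns the `F` leaf into `F.repl (se R) F`, which reduces to `F`
  ETree.repl_repl (se P) (se Q) .F (se R) .F
end

section
/- For all sequential propositional statements P, Q, se((P ∧' F) ∨' Q) = se((P ∨' T) ∧' Q), i.e., axiom F9 of EqFSCL is valid in the evaluation-tree semantics. -/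
/- Since leaf replacement composes, both sides of F9 are `se P` with every leaf replaced by `se Q`. -/

theorem ETree.repl_repl_s5 {A : Type*} (X Y Z U V : ETree A) :
    (X.repl Y Z).repl U V = X.repl (Y.repl U V) (Z.repl U V) := by
  induction X with
  | T | F => rfl
  | node l a r ihl ihr => simp only [ETree.repl, ihl, ihr]

theorem se_F9 {A : Type*} (P Q : SeqProp A) :
    se (SeqProp.or (SeqProp.and P SeqProp.F) Q)
      = se (SeqProp.and (SeqProp.or P SeqProp.T) Q) := by
  simp only [se, ETree.repl_repl_s5, ETree.repl]
end

section
/- In any equational theory satisfying the EqMSCL axioms (F = ¬T; x ∨' y = ¬(¬x ∧' ¬y); T ∧' x = x; x ∧' (x ∨' y) = x; (x ∨' y) ∧' z = (¬x ∧' (y ∧' z)) ∨' (x ∧' z)), the equation x ∧' x = x (idempotence of sequential conjunction) is derivable. -/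
/-!
Absorption at `x = T` gives `T ∨' y = T`, and then the memory axiom at `x = T` shows that `¬`
is an involution. With an involutive `¬`, the definition of `∨'` turns absorption into its dual
`x ∨' (x ∧' y) = x`, and feeding this back into absorption yields `x ∧' x = x`.
-/

section EqMSCL

variable {M : Type*} {tt : M} {neg : M → M} {conj disj : M → M → M}

theorem tt_disj (hTand : ∀ x, conj tt x = x) (hAbs : ∀ x y, conj x (disj x y) = x) (y : M) :
    disj tt y = tt := by
  simpa only [hTand] using hAbs tt y

theorem neg_conj_neg_tt_conj_disj (hOr : ∀ x y, disj x y = neg (conj (neg x) (neg y)))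
    (hTand : ∀ x, conj tt x = x) (hAbs : ∀ x y, conj x (disj x y) = x)
    (hMem : ∀ x y z, conj (disj x y) z = disj (conj (neg x) (conj y z)) (conj x z)) (x y z : M) :
    neg (conj (neg tt) (conj (disj x y) z)) = tt := by
  rw [hMem, hOr (conj (neg x) (conj y z)), ← hOr, tt_disj hTand hAbs]

theorem disj_conj_neg_tt_conj (hTand : ∀ x, conj tt x = x)
    (hAbs : ∀ x y, conj x (disj x y) = x)
    (hMem : ∀ x y z, conj (disj x y) z = disj (conj (neg x) (conj y z)) (conj x z)) (y z : M) :
    disj (conj (neg tt) (conj y z)) z = z := by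
  simpa only [tt_disj hTand hAbs, hTand] using (hMem tt y z).symm

theorem neg_neg_of_eqmscl (hOr : ∀ x y, disj x y = neg (conj (neg x) (neg y)))
    (hTand : ∀ x, conj tt x = x) (hAbs : ∀ x y, conj x (disj x y) = x)
    (hMem : ∀ x y z, conj (disj x y) z = disj (conj (neg x) (conj y z)) (conj x z)) (x : M) :
    neg (neg x) = x := by
  -- `w` is a `∨'`-term by the memory axiom, so `¬(F ∧' w) = T`.
  set w := conj (disj tt tt) x
  calc neg (neg x) = neg (conj tt (neg x)) := by rw [hTand]
    _ = neg (conj (neg (conj (neg tt) w)) (neg x)) := by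
      rw [neg_conj_neg_tt_conj_disj hOr hTand hAbs hMem]
    _ = disj (conj (neg tt) w) x := (hOr _ _).symm
    _ = x := disj_conj_neg_tt_conj hTand hAbs hMem _ _

theorem neg_conj_eq_disj_neg (hOr : ∀ x y, disj x y = neg (conj (neg x) (neg y)))
    (hInv : ∀ x, neg (neg x) = x) (x y : M) :
    neg (conj x y) = disj (neg x) (neg y) := by
  rw [hOr, hInv, hInv]

theorem disj_conj_self (hOr : ∀ x y, disj x y = neg (conj (neg x) (neg y)))
    (hAbs : ∀ x y, conj x (disj x y) = x) (hInv : ∀ x, neg (neg x) = x) (x y : M) :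
    disj x (conj x y) = x := by
  rw [hOr x, neg_conj_eq_disj_neg hOr hInv x y, hAbs, hInv]

end EqMSCL

theorem eqmscl_idem_and_general {M : Type*} (tt : M) (neg : M → M) (conj disj : M → M → M)
    (hOr : ∀ x y, disj x y = neg (conj (neg x) (neg y)))
    (hTand : ∀ x, conj tt x = x)
    (hAbs : ∀ x y, conj x (disj x y) = x)
    (hMem : ∀ x y z, conj (disj x y) z = disj (conj (neg x) (conj y z)) (conj x z)) :
    ∀ x, conj x x = x := by
  have hInv := neg_neg_of_eqmscl hOr hTand hAbs hMem
  intro x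
  calc conj x x = conj x (disj x (conj x x)) := by rw [disj_conj_self hOr hAbs hInv]
    _ = x := hAbs x _

theorem eqmscl_idem_and {M : Type*} (tt ff : M) (neg : M → M) (conj disj : M → M → M)
    (hNeg : ff = neg tt)
    (hOr : ∀ x y, disj x y = neg (conj (neg x) (neg y)))
    (hTand : ∀ x, conj tt x = x)
    (hAbs : ∀ x y, conj x (disj x y) = x)
    (hMem : ∀ x y z, conj (disj x y) z = disj (conj (neg x) (conj y z)) (conj x z)) :
    ∀ x, conj x x = x :=
  eqmscl_idem_and_general tt neg conj disj hOr hTand hAbs hMem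
end

section
/- In any equational theory satisfying the EqMSCL axioms, the double negation law ¬¬x = x is derivable. -/
/-!
Instantiating (Mem) at `x = y = T` shows `z = (¬T ∧' z) ∨' z`, which by (Or) exhibits every
element as a negation, so `¬` is surjective. Applied to `¬w`, the same identity collapses to
`¬w = ¬¬¬w`, because `¬(¬T ∧' ¬w) = T ∨' w = T` by (Abs). A surjective map with `¬¬¬ = ¬`
is an involution.
-/

namespace EqMSCL

variable {M : Type*} {tt : M} {neg : M → M} {conj disj : M → M → M}

theorem disj_true_left (hTand : ∀ x, conj tt x = x) (hAbs : ∀ x y, conj x (disj x y) = x)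
    (y : M) : disj tt y = tt := by
  simpa only [hTand] using hAbs tt y

theorem disj_conj_neg_true_self (hTand : ∀ x, conj tt x = x)
    (hAbs : ∀ x y, conj x (disj x y) = x)
    (hMem : ∀ x y z, conj (disj x y) z = disj (conj (neg x) (conj y z)) (conj x z)) (z : M) :
    disj (conj (neg tt) z) z = z := by
  simpa only [disj_true_left hTand hAbs, hTand] using (hMem tt tt z).symm

theorem neg_surjective (hOr : ∀ x y, disj x y = neg (conj (neg x) (neg y)))
    (hTand : ∀ x, conj tt x = x) (hAbs : ∀ x y, conj x (disj x y) = x)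
    (hMem : ∀ x y z, conj (disj x y) z = disj (conj (neg x) (conj y z)) (conj x z)) :
    Function.Surjective neg := fun z =>
  ⟨_, (hOr _ _).symm.trans (disj_conj_neg_true_self hTand hAbs hMem z)⟩

theorem neg_neg_neg (hOr : ∀ x y, disj x y = neg (conj (neg x) (neg y)))
    (hTand : ∀ x, conj tt x = x) (hAbs : ∀ x y, conj x (disj x y) = x)
    (hMem : ∀ x y z, conj (disj x y) z = disj (conj (neg x) (conj y z)) (conj x z)) (w : M) :
    neg (neg (neg w)) = neg w := by
  have hTrue : neg (conj (neg tt) (neg w)) = tt := by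
    rw [← hOr, disj_true_left hTand hAbs]
  calc neg (neg (neg w)) = disj (conj (neg tt) (neg w)) (neg w) := by rw [hOr, hTrue, hTand]
    _ = neg w := disj_conj_neg_true_self hTand hAbs hMem (neg w)

end EqMSCL

theorem eqmscl_double_neg_general {M : Type*} (tt : M) (neg : M → M) (conj disj : M → M → M)
    (hOr : ∀ x y, disj x y = neg (conj (neg x) (neg y)))
    (hTand : ∀ x, conj tt x = x)
    (hAbs : ∀ x y, conj x (disj x y) = x)
    (hMem : ∀ x y z, conj (disj x y) z = disj (conj (neg x) (conj y z)) (conj x z)) :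
    ∀ x, neg (neg x) = x := by
  intro x
  obtain ⟨w, rfl⟩ := EqMSCL.neg_surjective hOr hTand hAbs hMem x
  exact EqMSCL.neg_neg_neg hOr hTand hAbs hMem w

theorem eqmscl_double_neg {M : Type*} (tt ff : M) (neg : M → M) (conj disj : M → M → M)
    (hNeg : ff = neg tt)
    (hOr : ∀ x y, disj x y = neg (conj (neg x) (neg y)))
    (hTand : ∀ x, conj tt x = x)
    (hAbs : ∀ x y, conj x (disj x y) = x)
    (hMem : ∀ x y z, conj (disj x y) z = disj (conj (neg x) (conj y z)) (conj x z)) :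
    ∀ x, neg (neg x) = x :=
  eqmscl_double_neg_general tt neg conj disj hOr hTand hAbs hMem
end

section
/- In any equational theory satisfying the four axioms (Or) x ∨' y = ¬(¬x ∧' ¬y), (Abs) x ∧' (x ∨' y) = x, (Mem) (x ∨' y) ∧' z = (¬x ∧' (y ∧' z)) ∨' (x ∧' z), and (Comm) x ∧' y = y ∧' x, the equation (x ∨' ¬x) ∧' y = y is derivable (so x ∨' ¬x acts as a true constant). -/
/-! Expanding `(x ∨' ¬x) ∧' y` with (Mem) gives `(¬x ∧' (¬x ∧' y)) ∨' (x ∧' y)`, while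
expanding `(x ∨' y) ∧' y` and absorbing gives `(¬x ∧' (y ∧' y)) ∨' (x ∧' y) = y`. So it suffices
that `a ∧' (a ∧' y) = a ∧' (y ∧' y)`; both sides reduce to `(y ∧' y) ∧' a`, using that `∧'` is
right-idempotent, `(a ∧' b) ∧' b = a ∧' b`, which itself comes from absorption. -/

namespace ConjDisjNeg

variable {M : Type*} {neg : M → M} {conj disj : M → M → M}

theorem disj_comm (hOr : ∀ x y, disj x y = neg (conj (neg x) (neg y)))
    (hComm : ∀ x y, conj x y = conj y x) (a b : M) : disj a b = disj b a := by
  rw [hOr, hOr, hComm]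

theorem conj_disj_self_right (hOr : ∀ x y, disj x y = neg (conj (neg x) (neg y)))
    (hAbs : ∀ x y, conj x (disj x y) = x) (hComm : ∀ x y, conj x y = conj y x) (a b : M) :
    conj a (disj b a) = a := by
  rw [disj_comm hOr hComm, hAbs]

theorem disj_conj_neg_conj_self (hOr : ∀ x y, disj x y = neg (conj (neg x) (neg y)))
    (hAbs : ∀ x y, conj x (disj x y) = x)
    (hMem : ∀ x y z, conj (disj x y) z = disj (conj (neg x) (conj y z)) (conj x z))
    (hComm : ∀ x y, conj x y = conj y x) (x y : M) :
    disj (conj (neg x) (conj y y)) (conj x y) = y := by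
  rw [← hMem, hComm, conj_disj_self_right hOr hAbs hComm]

theorem conj_conj_right_idem (hOr : ∀ x y, disj x y = neg (conj (neg x) (neg y)))
    (hAbs : ∀ x y, conj x (disj x y) = x)
    (hMem : ∀ x y z, conj (disj x y) z = disj (conj (neg x) (conj y z)) (conj x z))
    (hComm : ∀ x y, conj x y = conj y x) (a b : M) :
    conj (conj a b) b = conj a b := by
  have h := conj_disj_self_right hOr hAbs hComm (conj a b) (conj (neg a) (conj b b))
  rwa [disj_conj_neg_conj_self hOr hAbs hMem hComm] at h

theorem conj_conj_self_left (hOr : ∀ x y, disj x y = neg (conj (neg x) (neg y)))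
    (hAbs : ∀ x y, conj x (disj x y) = x)
    (hMem : ∀ x y z, conj (disj x y) z = disj (conj (neg x) (conj y z)) (conj x z))
    (hComm : ∀ x y, conj x y = conj y x) (a y : M) :
    conj (conj y y) a = conj y a := by
  have hidem := conj_conj_right_idem hOr hAbs hMem hComm
  calc conj (conj y y) a
      = conj (conj (conj (disj y a) y) y) a := by rw [hComm (disj y a) y, hAbs]
    _ = conj y a := by rw [hidem, hComm (disj y a) y, hAbs]

theorem conj_conj_left_eq (hOr : ∀ x y, disj x y = neg (conj (neg x) (neg y)))
    (hAbs : ∀ x y, conj x (disj x y) = x)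
    (hMem : ∀ x y z, conj (disj x y) z = disj (conj (neg x) (conj y z)) (conj x z))
    (hComm : ∀ x y, conj x y = conj y x) (a y : M) :
    conj a (conj a y) = conj a (conj y y) := by
  calc conj a (conj a y)
      = conj (conj y a) a := by rw [hComm a y, hComm]
    _ = conj (conj y y) a := by
        rw [conj_conj_right_idem hOr hAbs hMem hComm, conj_conj_self_left hOr hAbs hMem hComm]
    _ = conj a (conj y y) := hComm _ _

end ConjDisjNeg

open ConjDisjNeg in
theorem sscl_Tdef {M : Type*} (neg : M → M) (conj disj : M → M → M)
    (hOr : ∀ x y, disj x y = neg (conj (neg x) (neg y)))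
    (hAbs : ∀ x y, conj x (disj x y) = x)
    (hMem : ∀ x y z, conj (disj x y) z = disj (conj (neg x) (conj y z)) (conj x z))
    (hComm : ∀ x y, conj x y = conj y x) :
    ∀ x y, conj (disj x (neg x)) y = y := by
  intro x y
  rw [hMem, conj_conj_left_eq hOr hAbs hMem hComm,
    disj_conj_neg_conj_self hOr hAbs hMem hComm]
end

section
/- In any model of the axioms CP2 (x ◁ F ▷ y = y), CP3s ((x ◁ y ▷ z) ◁ y ▷ F = y ◁ x ▷ F), and CP4 (x ◁ (y ◁ z ▷ u) ▷ v = (x ◁ y ▷ v) ◁ z ▷ (x ◁ u ▷ v)), the static axiom F ◁ x ▷ F = F and the axiom CP3 (T ◁ x ▷ F = x) are derivable, where CP3 requires also CP1 (x ◁ T ▷ y = x). -/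
/-! Taking the condition `F` in CP3s makes its left side collapse by CP2, which gives
`F ◁ x ▷ F = F` at once. For CP3, CP4 with CP1 and CP2 shows that `T ◁ x ▷ F` may replace `x`
in condition position; feeding this into CP3s with `T` on the left identifies `T ◁ x ▷ F` with `x`. -/

section ConditionalAlgebra

variable {M : Type*} {tt ff : M} {cond : M → M → M → M}

theorem cond_ff_ff (hCP2 : ∀ x y, cond x ff y = y)
    (hCP3s : ∀ x y z, cond (cond x y z) y ff = cond y x ff) (x : M) :
    cond ff x ff = ff := by
  rw [← hCP3s x ff x, hCP2]

theorem cond_cond_tt_ff (hCP1 : ∀ x y, cond x tt y = x) (hCP2 : ∀ x y, cond x ff y = y)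
    (hCP4 : ∀ x y z u v, cond x (cond y z u) v = cond (cond x y v) z (cond x u v))
    (a x v : M) : cond a (cond tt x ff) v = cond a x v := by
  rw [hCP4, hCP1, hCP2]

theorem cond_tt_ff (hCP1 : ∀ x y, cond x tt y = x) (hCP2 : ∀ x y, cond x ff y = y)
    (hCP3s : ∀ x y z, cond (cond x y z) y ff = cond y x ff)
    (hCP4 : ∀ x y z u v, cond x (cond y z u) v = cond (cond x y v) z (cond x u v)) (x : M) :
    cond tt x ff = x := by
  have hself : ∀ y, cond (cond tt y ff) y ff = y := fun y => by rw [hCP3s, hCP1]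
  calc cond tt x ff = cond (cond tt (cond tt x ff) ff) (cond tt x ff) ff := (hself _).symm
    _ = cond (cond tt x ff) x ff := by simp only [cond_cond_tt_ff hCP1 hCP2 hCP4]
    _ = x := hself x

end ConditionalAlgebra

theorem cp_alt_derives {M : Type*} (tt ff : M) (cond : M → M → M → M)
    (hCP1 : ∀ x y, cond x tt y = x)
    (hCP2 : ∀ x y, cond x ff y = y)
    (hCP3s : ∀ x y z, cond (cond x y z) y ff = cond y x ff)
    (hCP4 : ∀ x y z u v,
      cond x (cond y z u) v = cond (cond x y v) z (cond x u v)) :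
    (∀ x, cond ff x ff = ff) ∧ (∀ x, cond tt x ff = x) :=
  ⟨cond_ff_ff hCP2 hCP3s, cond_tt_ff hCP1 hCP2 hCP3s hCP4⟩
end

section
/- In any model of the axioms CPs = {CP1, CP2, CP3, CP4, CPmem, CPstat} for the ternary conditional, defining x ∧' y := y ◁ x ▷ F, sequential conjunction is commutative: x ∧' y = y ∧' x. -/
/-! Both sides equal `(x ∧' y) ◁ y ▷ F`. By memorisation the value of `y` is known in both branches
of a test on `y`: in the then-branch `x` may be replaced by `x ∧' y = y ◁ x ▷ F`, which gives
`y ∧' x = x ◁ y ▷ F = (x ∧' y) ◁ y ▷ F`; in the else-branch `x ∧' y` evaluates to `F ◁ x ▷ F = F`,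
so `(x ∧' y) ◁ y ▷ F = (x ∧' y) ◁ y ▷ (x ∧' y) = x ∧' y` by idempotence. -/

namespace Conditional

variable {M : Type*}

section Axioms

variable (tt ff : M) (cond : M → M → M → M)

local notation:60 x " ◁ " y " ▷ " z => cond x y z

def CP1 : Prop := ∀ x y, (x ◁ tt ▷ y) = x

def CP2 : Prop := ∀ x y, (x ◁ ff ▷ y) = y

def CP3 : Prop := ∀ x, (tt ◁ x ▷ ff) = x

def CP4 : Prop := ∀ x y z u v, (x ◁ (y ◁ z ▷ u) ▷ v) = ((x ◁ y ▷ v) ◁ z ▷ (x ◁ u ▷ v))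

def CPmem : Prop := ∀ x y z u v w, (x ◁ y ▷ (z ◁ u ▷ (v ◁ y ▷ w))) = (x ◁ y ▷ (z ◁ u ▷ w))

def CPstat : Prop := ∀ x, (ff ◁ x ▷ ff) = ff

end Axioms

variable {tt ff : M} {cond : M → M → M → M}

local notation:60 x " ◁ " y " ▷ " z => cond x y z

theorem cond_neg_eq_swap (h1 : CP1 tt cond) (h2 : CP2 ff cond) (h4 : CP4 cond) (a c b : M) :
    (a ◁ (ff ◁ c ▷ tt) ▷ b) = (b ◁ c ▷ a) := by
  rw [h4, h1, h2]

theorem cond_mem_else (h1 : CP1 tt cond) (h2 : CP2 ff cond) (h4 : CP4 cond) (hmem : CPmem cond)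
    (x y z u v w : M) : (x ◁ y ▷ ((v ◁ y ▷ w) ◁ u ▷ z)) = (x ◁ y ▷ (w ◁ u ▷ z)) := by
  rw [← cond_neg_eq_swap h1 h2 h4 z u, ← cond_neg_eq_swap h1 h2 h4 z u]
  exact hmem ..

theorem cond_mem_then (h1 : CP1 tt cond) (h2 : CP2 ff cond) (h4 : CP4 cond) (hmem : CPmem cond)
    (x y z u v w : M) : (((v ◁ y ▷ w) ◁ u ▷ z) ◁ y ▷ x) = ((v ◁ u ▷ z) ◁ y ▷ x) := by
  have swap := cond_neg_eq_swap h1 h2 h4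
  -- `CPmem` for the negated test `F ◁ y ▷ T`
  rw [← swap x y, ← swap x y, ← swap z u, ← swap z u v, ← swap w y v]
  exact hmem ..

theorem cond_self (h2 : CP2 ff cond) (h4 : CP4 cond) (hstat : CPstat ff cond) (w y : M) :
    (w ◁ y ▷ w) = w :=
  calc (w ◁ y ▷ w) = ((ff ◁ ff ▷ w) ◁ y ▷ (ff ◁ ff ▷ w)) := by rw [h2]
    _ = (ff ◁ (ff ◁ y ▷ ff) ▷ w) := (h4 ..).symm
    _ = w := by rw [hstat, h2]

theorem cond_eq_and_cond (h1 : CP1 tt cond) (h2 : CP2 ff cond) (h3 : CP3 tt ff cond)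
    (h4 : CP4 cond) (hmem : CPmem cond) (x y z : M) :
    (x ◁ y ▷ z) = ((y ◁ x ▷ ff) ◁ y ▷ z) := by
  have h := cond_mem_then h1 h2 h4 hmem z y ff x tt ff
  rw [h3, h3] at h
  exact h.symm

theorem and_cond_ff_eq_self (h1 : CP1 tt cond) (h2 : CP2 ff cond) (h3 : CP3 tt ff cond)
    (h4 : CP4 cond) (hmem : CPmem cond) (hstat : CPstat ff cond) (x y : M) :
    ((y ◁ x ▷ ff) ◁ y ▷ ff) = (y ◁ x ▷ ff) :=
  calc ((y ◁ x ▷ ff) ◁ y ▷ ff) = ((y ◁ x ▷ ff) ◁ y ▷ ((tt ◁ y ▷ ff) ◁ x ▷ ff)) := by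
        rw [cond_mem_else h1 h2 h4 hmem, hstat]
    _ = (y ◁ x ▷ ff) := by rw [h3, cond_self h2 h4 hstat]

end Conditional

theorem cps_and_comm {M : Type*} (tt ff : M) (cond : M → M → M → M)
    (hCP1 : ∀ x y, cond x tt y = x)
    (hCP2 : ∀ x y, cond x ff y = y)
    (hCP3 : ∀ x, cond tt x ff = x)
    (hCP4 : ∀ x y z u v,
      cond x (cond y z u) v = cond (cond x y v) z (cond x u v))
    (hCPmem : ∀ x y z u v w,
      cond x y (cond z u (cond v y w)) = cond x y (cond z u w))
    (hCPstat : ∀ x, cond ff x ff = ff) :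
    ∀ x y, cond y x ff = cond x y ff := fun x y =>
  calc cond y x ff = cond (cond y x ff) y ff :=
        (Conditional.and_cond_ff_eq_self hCP1 hCP2 hCP3 hCP4 hCPmem hCPstat x y).symm
    _ = cond x y ff := (Conditional.cond_eq_and_cond hCP1 hCP2 hCP3 hCP4 hCPmem x y ff).symm
end
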